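/- Let Γ be a duplication forest for a network G and let θ₁, θ₂ be two duplicate sequences compatible with Γ. Then the seed graphs G₀^{θ₁} and G₀^{θ₂} have the same number of edges, and consequently the total edge gain along the two histories is equal: δ(θ₁) + e(θ₁) = δ(θ₂) + e(θ₂). -/

import Mathlib

open scoped Classical

universe u

variable {V : Type u}

/-- The merge (backward) operator `R_v^u(G)`: contract duplicate `v` into anchor `u`.
Vertex `v` becomes isolated (representing its removal from the vertex set). -/
def mergeG (G : SimpleGraph V) (u v : V) : SimpleGraph V where
  Adj x y := x ≠ y ∧ x ≠ v ∧ y ≠ v ∧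
    (G.Adj x y ∨ (x = u ∧ G.Adj v y) ∨ (y = u ∧ G.Adj v x))
  symm := by
    constructor
    rintro x y ⟨h1, h2, h3, h4⟩
    refine ⟨h1.symm, h3, h2, ?_⟩
    rcases h4 with h | ⟨a, b⟩ | ⟨a, b⟩
    · exact Or.inl h.symm
    · exact Or.inr (Or.inr ⟨a, b⟩)
    · exact Or.inr (Or.inl ⟨a, b⟩)
  loopless := by constructor; rintro x ⟨h, _⟩; exact h rfl

/-- δ(v): 1 if the duplicate `v` is adjacent to its anchor `u`. -/
noncomputable def deltaI (G : SimpleGraph V) (u v : V) : ℕ :=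
  if G.Adj u v then 1 else 0

/-- e(v): number of common neighbours of anchor `u` and duplicate `v`. -/
noncomputable def extI [Fintype V] (G : SimpleGraph V) (u v : V) : ℕ :=
  (G.neighborFinset u ∩ G.neighborFinset v).card

/-- ℓ(v): number of vertices (other than `u`, `v`) adjacent to exactly one of `u`, `v`. -/
noncomputable def lossI [Fintype V] (G : SimpleGraph V) (u v : V) : ℕ :=
  (((G.neighborFinset u ∪ G.neighborFinset v) \
      (G.neighborFinset u ∩ G.neighborFinset v)) \ {u, v}).card

/-- Apply the merge operators backward along a list of (anchor, duplicate) pairs. -/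
noncomputable def graphAfter (G : SimpleGraph V) (steps : List (V × V)) : SimpleGraph V :=
  steps.foldl (fun g p => mergeG g p.1 p.2) G

noncomputable def deltaNum : SimpleGraph V → List (V × V) → ℕ
  | _, [] => 0
  | G, s :: rest => deltaI G s.1 s.2 + deltaNum (mergeG G s.1 s.2) rest

noncomputable def extNum [Fintype V] : SimpleGraph V → List (V × V) → ℕ
  | _, [] => 0
  | G, s :: rest => extI G s.1 s.2 + extNum (mergeG G s.1 s.2) rest

noncomputable def lossNum [Fintype V] : SimpleGraph V → List (V × V) → ℕ
  | _, [] => 0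
  | G, s :: rest => lossI G s.1 s.2 + lossNum (mergeG G s.1 s.2) rest

/-- The likelihood of a (backward) history: product of one-step DMC transition
probabilities `p_c^{δ_i} p^{e_i} q^{ℓ_i}` with `q = (1-p)/2`. -/
noncomputable def likelihood [Fintype V] (pc p : ℝ) : SimpleGraph V → List (V × V) → ℝ
  | _, [] => 1
  | G, s :: rest =>
      pc ^ deltaI G s.1 s.2 * p ^ extI G s.1 s.2 * ((1 - p) / 2) ^ lossI G s.1 s.2 *
        likelihood pc p (mergeG G s.1 s.2) rest

/-- Rooted binary trees. -/
inductive BTree (V : Type u) : Type u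
  | leaf : V → BTree V
  | node : BTree V → BTree V → BTree V

def BTree.leaves : BTree V → List V
  | .leaf v => [v]
  | .node l r => l.leaves ++ r.leaves

/-- A duplication forest: a list of rooted binary trees. -/
abbrev Forest (V : Type u) := List (BTree V)

def Forest.leaves (Γ : Forest V) : List V := Γ.flatMap BTree.leaves

/-- Replace the cherry `{u, v}` of a tree by the single leaf `u`. -/
inductive ReplaceCherry : BTree V → V → V → BTree V → Prop
  | base_left (u v : V) : ReplaceCherry (.node (.leaf u) (.leaf v)) u v (.leaf u)
  | base_right (u v : V) : ReplaceCherry (.node (.leaf v) (.leaf u)) u v (.leaf u)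
  | left {l l' r : BTree V} {u v : V} :
      ReplaceCherry l u v l' → ReplaceCherry (.node l r) u v (.node l' r)
  | right {l r r' : BTree V} {u v : V} :
      ReplaceCherry r u v r' → ReplaceCherry (.node l r) u v (.node l r')

/-- One backward step on a duplication forest: replace the cherry `{u,v}` in one tree. -/
inductive ForestStep : Forest V → V → V → Forest V → Prop
  | head {t t' : BTree V} {ts : Forest V} {u v : V} :
      ReplaceCherry t u v t' → ForestStep (t :: ts) u v (t' :: ts)
  | tail {t : BTree V} {ts ts' : Forest V} {u v : V} :
      ForestStep ts u v ts' → ForestStep (t :: ts) u v (t :: ts')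

/-- `FUnfold Γ steps Γ₀`: the (anchor, duplicate) list `steps`, processed backward in time,
is compatible with the duplication forest `Γ` and reduces it to `Γ₀`. -/
inductive FUnfold : Forest V → List (V × V) → Forest V → Prop
  | nil (Γ : Forest V) : FUnfold Γ [] Γ
  | cons {Γ Γ' Γ₀ : Forest V} {u v : V} {steps : List (V × V)} :
      ForestStep Γ u v Γ' → FUnfold Γ' steps Γ₀ → FUnfold Γ ((u, v) :: steps) Γ₀

/-- A forest consisting only of isolated leaves (duplication forest of a seed graph). -/
def IsSeed (Γ : Forest V) : Prop := ∀ t ∈ Γ, ∃ v, t = BTree.leaf v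

/-!
Merging a duplicate `v` into its anchor `u` is the pushforward of the graph along the map
sending `v` to `u` and fixing everything else, so the seed graph of a history `θ` is the
pushforward `G.map σ_θ` along the composite `σ_θ` of these maps. Compatibility with `Γ` forces
`σ_θ` to send the leaves of each tree into the corresponding tree of the seed forest, which is a
single leaf; hence the fibres of `σ_θ` are exactly the trees of `Γ`, independently of `θ`. The
number of edges of a pushforward depends only on the fibres of the map, which gives the first
claim; the second follows from `|E(G)| = |E(G₀^θ)| + δ(θ) + e(θ)`.
-/

open Finset

lemma mergeG_adj {G : SimpleGraph V} {u v x y : V} :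
    (mergeG G u v).Adj x y ↔ x ≠ y ∧ x ≠ v ∧ y ≠ v ∧
      (G.Adj x y ∨ (x = u ∧ G.Adj v y) ∨ (y = u ∧ G.Adj v x)) :=
  Iff.rfl

section EdgeCount

variable [Fintype V]

lemma degree_eq_extI_add_deltaI_add (H : SimpleGraph V) (u v : V) :
    H.degree v = extI H u v + deltaI H u v +
      #(H.neighborFinset v \ insert u (H.neighborFinset u)) := by
  rw [← H.card_neighborFinset_eq_degree,
    ← card_inter_add_card_sdiff (H.neighborFinset v) (insert u (H.neighborFinset u)),
    extI, deltaI, inter_comm (H.neighborFinset u)]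
  by_cases huv : H.Adj u v
  · rw [inter_insert_of_mem (by simpa using huv.symm), card_insert_of_notMem (by simp), if_pos huv]
  · rw [inter_insert_of_notMem (by simpa using fun h => huv h.symm), if_neg huv, add_zero]

lemma edgeFinset_mergeG (H : SimpleGraph V) (u v : V) :
    (mergeG H u v).edgeFinset = {e ∈ H.edgeFinset | v ∉ e} ∪
      (H.neighborFinset v \ insert u (H.neighborFinset u)).image (fun y => s(u, y)) := by
  ext e
  induction e with
  | _ x y =>
    simp only [SimpleGraph.mem_edgeFinset, SimpleGraph.mem_edgeSet, mem_union, mem_filter,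
      mem_image, mem_sdiff, mem_insert, SimpleGraph.mem_neighborFinset, Sym2.mem_iff,
      mergeG_adj, Sym2.eq_iff]
    grind [SimpleGraph.Adj.ne, SimpleGraph.Adj.symm]

lemma card_edgeFinset_eq_card_mergeG_add (H : SimpleGraph V) (u v : V) :
    #H.edgeFinset = #(mergeG H u v).edgeFinset + deltaI H u v + extI H u v := by
  have hdisj : Disjoint {e ∈ H.edgeFinset | v ∉ e}
      ((H.neighborFinset v \ insert u (H.neighborFinset u)).image (fun y => s(u, y))) := by
    simp only [disjoint_left, mem_filter, mem_image, mem_sdiff, mem_insert,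
      SimpleGraph.mem_neighborFinset, SimpleGraph.mem_edgeFinset, not_exists, not_and]
    rintro _ ⟨huy, -⟩ y ⟨-, hy⟩ rfl
    exact hy (Or.inr huy)
  have hsplit := card_filter_add_card_filter_not (s := H.edgeFinset) (fun e => v ∈ e)
  rw [← H.incidenceFinset_eq_filter, H.card_incidenceFinset_eq_degree,
    degree_eq_extI_add_deltaI_add H u v] at hsplit
  rw [edgeFinset_mergeG, card_union_of_disjoint hdisj,
    card_image_of_injective _ (fun _ _ => Sym2.congr_right.mp)]
  omega

lemma card_edgeFinset_eq_card_graphAfter_add (H : SimpleGraph V) (s : List (V × V)) :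
    #H.edgeFinset = #(graphAfter H s).edgeFinset + deltaNum H s + extNum H s := by
  induction s generalizing H with
  | nil => rfl
  | cons p s ih =>
    rw [card_edgeFinset_eq_card_mergeG_add H p.1 p.2, ih, deltaNum, extNum,
      show graphAfter H (p :: s) = graphAfter (mergeG H p.1 p.2) s from rfl]
    omega

end EdgeCount

lemma mergeG_eq_map {u v : V} (huv : u ≠ v) (G : SimpleGraph V) :
    mergeG G u v = G.map (Function.update id v u) := by
  ext x y
  simp only [mergeG_adj, SimpleGraph.map_adj', Function.update_apply, id]
  grind [SimpleGraph.Adj.ne, SimpleGraph.Adj.symm]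

lemma card_edgeFinset_map_quotient_ker {W : Type*} [Fintype V] [Fintype W] (G : SimpleGraph V)
    (f : V → W) : #(G.map f).edgeFinset = #(G.map (Quotient.mk (Setoid.ker f))).edgeFinset := by
  convert SimpleGraph.card_edgeFinset_map ⟨_, Setoid.kerLift_injective f⟩ _ using 3
  rw [SimpleGraph.map_map]
  rfl

lemma card_edgeFinset_map_congr {W : Type*} [Fintype V] [Fintype W] (G : SimpleGraph V)
    {f g : V → W} (hfg : ∀ a b, f a = f b ↔ g a = g b) :
    #(G.map f).edgeFinset = #(G.map g).edgeFinset := by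
  rw [card_edgeFinset_map_quotient_ker G f, card_edgeFinset_map_quotient_ker G g,
    show Setoid.ker f = Setoid.ker g from Setoid.ext hfg]

@[simp] lemma Forest.leaves_cons (t : BTree V) (Γ : Forest V) :
    Forest.leaves (t :: Γ) = t.leaves ++ Forest.leaves Γ :=
  List.flatMap_cons

lemma Forest.mem_leaves_of_mem {x : V} {t : BTree V} {Γ : Forest V} (ht : t ∈ Γ)
    (hx : x ∈ t.leaves) : x ∈ Forest.leaves Γ :=
  List.mem_flatMap.mpr ⟨t, ht, hx⟩

lemma ReplaceCherry.perm {t t' : BTree V} {u v : V} (h : ReplaceCherry t u v t') :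
    t.leaves.Perm (v :: t'.leaves) := by
  induction h with
  | base_left u v => exact List.Perm.swap v u []
  | base_right u v => exact List.Perm.refl _
  | left _ ih => simpa [BTree.leaves] using ih.append_right _
  | right _ ih => exact (ih.append_left _).trans List.perm_middle

lemma ReplaceCherry.mem_leaves {t t' : BTree V} {u v : V} (h : ReplaceCherry t u v t') :
    u ∈ t'.leaves := by
  induction h <;> simp_all [BTree.leaves]

lemma ForestStep.perm {Γ Γ' : Forest V} {u v : V} (h : ForestStep Γ u v Γ') :
    (Forest.leaves Γ).Perm (v :: Forest.leaves Γ') := by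
  induction h with
  | head h => simpa using h.perm.append_right _
  | tail _ ih => simpa using (ih.append_left _).trans List.perm_middle

lemma ForestStep.mem_leaves {Γ Γ' : Forest V} {u v : V} (h : ForestStep Γ u v Γ') :
    u ∈ Forest.leaves Γ' := by
  induction h with
  | head h => simp [h.mem_leaves]
  | tail _ ih => simp [ih]

lemma ForestStep.nodup {Γ Γ' : Forest V} {u v : V} (h : ForestStep Γ u v Γ')
    (hnd : (Forest.leaves Γ).Nodup) : v ∉ Forest.leaves Γ' ∧ (Forest.leaves Γ').Nodup :=
  List.nodup_cons.mp (h.perm.nodup_iff.mp hnd)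

lemma ForestStep.ne {Γ Γ' : Forest V} {u v : V} (h : ForestStep Γ u v Γ')
    (hnd : (Forest.leaves Γ).Nodup) : u ≠ v :=
  fun huv => (h.nodup hnd).1 (huv ▸ h.mem_leaves)

lemma FUnfold.nodup {Γ Γ₀ : Forest V} {s : List (V × V)} (h : FUnfold Γ s Γ₀)
    (hnd : (Forest.leaves Γ).Nodup) : (Forest.leaves Γ₀).Nodup := by
  induction h with
  | nil => exact hnd
  | cons hstep _ ih => exact ih (hstep.nodup hnd).2

def Forest.MapsTo (σ : V → V) (Γ Γ' : Forest V) : Prop :=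
  List.Forall₂ (fun t t' => ∀ x ∈ t.leaves, σ x ∈ t'.leaves) Γ Γ'

lemma Forest.MapsTo.comp {f g : V → V} {Γ Γ' Γ'' : Forest V} (hg : Forest.MapsTo g Γ' Γ'')
    (hf : Forest.MapsTo f Γ Γ') : Forest.MapsTo (g ∘ f) Γ Γ'' := by
  induction hf generalizing Γ'' with
  | nil => cases hg; exact .nil
  | cons hft _ ih =>
    cases hg with
    | cons hgt hg => exact .cons (fun x hx => hgt _ (hft x hx)) (ih hg)

lemma Forest.MapsTo.mem_leaves {σ : V → V} {Γ Γ' : Forest V} (h : Forest.MapsTo σ Γ Γ')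
    {x : V} (hx : x ∈ Forest.leaves Γ) : σ x ∈ Forest.leaves Γ' := by
  induction h with
  | nil => simp [Forest.leaves] at hx
  | cons ht _ ih =>
    simp only [Forest.leaves_cons, List.mem_append] at hx ⊢
    exact hx.imp (ht x) ih

lemma List.update_id_mem_of_notMem {l : List V} {u v x : V} (hv : v ∉ l) (hx : x ∈ l) :
    Function.update id v u x ∈ l := by
  rwa [Function.update_of_ne (by rintro rfl; exact hv hx)]

lemma Forest.mapsTo_update_of_notMem {u v : V} {Γ : Forest V} (hv : v ∉ Forest.leaves Γ) :
    Forest.MapsTo (Function.update id v u) Γ Γ :=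
  List.forall₂_same.mpr fun _ ht _ =>
    List.update_id_mem_of_notMem fun hvt => hv (Forest.mem_leaves_of_mem ht hvt)

lemma ReplaceCherry.mapsTo_update {t t' : BTree V} {u v : V} (h : ReplaceCherry t u v t') :
    ∀ x ∈ t.leaves, Function.update id v u x ∈ t'.leaves := by
  intro x hx
  rcases eq_or_ne x v with rfl | hxv
  · simpa using h.mem_leaves
  · simpa [hxv] using h.perm.subset hx

lemma ForestStep.mapsTo_update {Γ Γ' : Forest V} {u v : V} (h : ForestStep Γ u v Γ')
    (hnd : (Forest.leaves Γ).Nodup) : Forest.MapsTo (Function.update id v u) Γ Γ' := by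
  induction h with
  | head h =>
    simp only [Forest.leaves_cons, List.nodup_append] at hnd
    exact .cons h.mapsTo_update (Forest.mapsTo_update_of_notMem fun hv =>
      hnd.2.2 _ (h.perm.symm.subset List.mem_cons_self) _ hv rfl)
  | tail h ih =>
    simp only [Forest.leaves_cons, List.nodup_append] at hnd
    exact .cons (fun _ => List.update_id_mem_of_notMem fun hv =>
      hnd.2.2 _ hv _ (h.perm.symm.subset List.mem_cons_self) rfl) (ih hnd.2.1)

lemma FUnfold.exists_graphAfter_eq_map {Γ Γ₀ : Forest V} {s : List (V × V)}
    (h : FUnfold Γ s Γ₀) (hnd : (Forest.leaves Γ).Nodup) :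
    ∃ σ : V → V, (∀ H : SimpleGraph V, graphAfter H s = H.map σ) ∧ Forest.MapsTo σ Γ Γ₀ := by
  induction h with
  | nil Γ => exact ⟨id, fun H => H.map_id.symm, List.forall₂_same.mpr fun _ _ _ => id⟩
  | @cons _ _ _ u v _ hstep _ ih =>
    obtain ⟨σ, hσ, hmaps⟩ := ih (hstep.nodup hnd).2
    refine ⟨σ ∘ Function.update id v u, fun H => ?_, hmaps.comp (hstep.mapsTo_update hnd)⟩
    rw [← SimpleGraph.map_map, ← mergeG_eq_map (hstep.ne hnd)]
    exact hσ _

lemma Forest.MapsTo.apply_eq_apply_iff {σ : V → V} {Γ Γ₀ : Forest V} (h : Forest.MapsTo σ Γ Γ₀)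
    (hseed : IsSeed Γ₀) (hnd : (Forest.leaves Γ₀).Nodup) {a b : V}
    (ha : a ∈ Forest.leaves Γ) (hb : b ∈ Forest.leaves Γ) :
    σ a = σ b ↔ ∃ t ∈ Γ, a ∈ t.leaves ∧ b ∈ t.leaves := by
  induction h with
  | nil => simp [Forest.leaves] at ha
  | @cons t t₀ Γ Γ₀ ht hrest ih =>
    obtain ⟨w, rfl⟩ := hseed t₀ List.mem_cons_self
    simp only [Forest.leaves_cons, BTree.leaves, List.singleton_append, List.nodup_cons] at hnd
    have hin : ∀ x ∈ t.leaves, σ x = w := fun x hx => List.mem_singleton.mp (ht x hx)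
    have hout : ∀ x ∈ Forest.leaves Γ, σ x ≠ w := fun x hx hxw =>
      hnd.1 (hxw ▸ Forest.MapsTo.mem_leaves hrest hx)
    simp only [Forest.leaves_cons, List.mem_append] at ha hb
    simp only [List.exists_mem_cons_iff]
    rcases ha with ha | ha <;> rcases hb with hb | hb
    · exact iff_of_true ((hin a ha).trans (hin b hb).symm) (.inl ⟨ha, hb⟩)
    · refine iff_of_false (fun hab => hout b hb (hab ▸ hin a ha)) ?_
      rintro (⟨-, hb'⟩ | ⟨t', ht', ha', -⟩)
      exacts [hout b hb (hin b hb'), hout a (Forest.mem_leaves_of_mem ht' ha') (hin a ha)]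
    · refine iff_of_false (fun hab => hout a ha (hab ▸ hin b hb)) ?_
      rintro (⟨ha', -⟩ | ⟨t', ht', -, hb'⟩)
      exacts [hout a ha (hin a ha'), hout b (Forest.mem_leaves_of_mem ht' hb') (hin b hb)]
    · rw [ih (fun t ht => hseed t (List.mem_cons_of_mem _ ht)) hnd.2 ha hb]
      exact ⟨.inr, fun h => h.resolve_left fun ⟨ha', _⟩ => hout a ha (hin a ha')⟩

/-- for two duplicate sequences compatible with the duplication forest
`Γ`, the seed graphs have the same number of edges, and consequently the total edge
gain along the two histories is equal: `δ(θ₁) + e(θ₁) = δ(θ₂) + e(θ₂)`. -/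
theorem stmt19 [Fintype V] (G : SimpleGraph V) (Γ : Forest V)
    (hnd : (Forest.leaves Γ).Nodup) (hall : ∀ x : V, x ∈ Forest.leaves Γ)
    (s₁ s₂ : List (V × V)) (Γ₁ Γ₂ : Forest V)
    (h₁ : FUnfold Γ s₁ Γ₁) (hseed₁ : IsSeed Γ₁)
    (h₂ : FUnfold Γ s₂ Γ₂) (hseed₂ : IsSeed Γ₂) :
    (graphAfter G s₁).edgeFinset.card = (graphAfter G s₂).edgeFinset.card ∧
      deltaNum G s₁ + extNum G s₁ = deltaNum G s₂ + extNum G s₂ := by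
  obtain ⟨σ₁, hG₁, hσ₁⟩ := h₁.exists_graphAfter_eq_map hnd
  obtain ⟨σ₂, hG₂, hσ₂⟩ := h₂.exists_graphAfter_eq_map hnd
  have hker : ∀ a b, σ₁ a = σ₁ b ↔ σ₂ a = σ₂ b := fun a b =>
    (hσ₁.apply_eq_apply_iff hseed₁ (h₁.nodup hnd) (hall a) (hall b)).trans
      (hσ₂.apply_eq_apply_iff hseed₂ (h₂.nodup hnd) (hall a) (hall b)).symm
  have hcard : #(graphAfter G s₁).edgeFinset = #(graphAfter G s₂).edgeFinset := by
    rw [hG₁, hG₂]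
    -- `convert` reconciles the `Fintype` instances on the two edge sets
    convert card_edgeFinset_map_congr G hker using 3
  have hgain₁ := card_edgeFinset_eq_card_graphAfter_add G s₁
  have hgain₂ := card_edgeFinset_eq_card_graphAfter_add G s₂
  exact ⟨hcard, by omega⟩
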